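/- The rank of matrix multiplication is symmetric under cyclic permutation of the dimensions: for any field F and positive integers m, n, p, R_F(⟨m, n, p⟩) = R_F(⟨n, p, m⟩). -/
import Mathlib


/-- `MatMulRank F m n p` is the tensor rank over `F` of the `m × n × p` matrix
multiplication tensor `Σ_{i,j,k} x_{ij} y_{jk} z_{ik}`: the least `r` admitting a
trilinear decomposition with coefficients `α, β, γ ∈ F`. -/
noncomputable def MatMulRank (F : Type) [Field F] (m n p : ℕ) : ℕ :=
  sInf {r : ℕ |
    ∃ (α : Fin m → Fin n → Fin r → F) (β : Fin n → Fin p → Fin r → F)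
      (γ : Fin m → Fin p → Fin r → F),
      ∀ (i i' : Fin m) (j j' : Fin n) (k k' : Fin p),
        (∑ ℓ : Fin r, α i j ℓ * β j' k ℓ * γ i' k' ℓ)
          = if i = i' ∧ j = j' ∧ k = k' then 1 else 0}

lemma matMul_cyc_mem (F : Type) [Field F] (m n p r : ℕ)
    (h : ∃ (α : Fin m → Fin n → Fin r → F) (β : Fin n → Fin p → Fin r → F)
      (γ : Fin m → Fin p → Fin r → F),
      ∀ (i i' : Fin m) (j j' : Fin n) (k k' : Fin p),
        (∑ ℓ : Fin r, α i j ℓ * β j' k ℓ * γ i' k' ℓ)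
          = if i = i' ∧ j = j' ∧ k = k' then 1 else 0) :
    ∃ (α : Fin n → Fin p → Fin r → F) (β : Fin p → Fin m → Fin r → F)
      (γ : Fin n → Fin m → Fin r → F),
      ∀ (i i' : Fin n) (j j' : Fin p) (k k' : Fin m),
        (∑ ℓ : Fin r, α i j ℓ * β j' k ℓ * γ i' k' ℓ)
          = if i = i' ∧ j = j' ∧ k = k' then 1 else 0 := by
  obtain ⟨α, β, γ, h⟩ := h
  refine ⟨fun j k ℓ => β j k ℓ, fun k i ℓ => γ i k ℓ, fun j i ℓ => α i j ℓ, ?_⟩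
  intro a a' b b' c c'
  have key : (∑ ℓ : Fin r, β a b ℓ * γ c b' ℓ * α c' a' ℓ)
      = ∑ ℓ : Fin r, α c' a' ℓ * β a b ℓ * γ c b' ℓ :=
    Finset.sum_congr rfl fun _ _ => by ring
  rw [key, h c' c a' a b b']
  exact if_congr
    ⟨fun ⟨h1, h2, h3⟩ => ⟨h2.symm, h3, h1.symm⟩,
     fun ⟨h1, h2, h3⟩ => ⟨h3.symm, h1.symm, h2⟩⟩ rfl rfl

/-- The rank of matrix multiplication is symmetric under cyclic permutation of the
dimensions: `R_F(⟨m,n,p⟩) = R_F(⟨n,p,m⟩)`. -/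
theorem matMulRank_cyclic (F : Type) [Field F] (m n p : ℕ)
    (hm : 0 < m) (hn : 0 < n) (hp : 0 < p) :
    MatMulRank F m n p = MatMulRank F n p m := by
  unfold MatMulRank
  congr 1
  ext r
  constructor
  · exact matMul_cyc_mem F m n p r
  · exact fun h => matMul_cyc_mem F p m n r (matMul_cyc_mem F n p m r h)
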